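/- Let a, b, d be integers with a < b and b + 2 ≤ d ≤ a + b. Define q_k = C(k+a+2,2) - 3·C(k+a+3-d,2) - ab for k ≥ b-1. Then q_k^2 > q_{k-1} q_{k+1} for all k with b ≤ k ≤ (3d-6)/2 - a - 1. -/
import Mathlib
set_option maxHeartbeats 1000000


/-- `C(j,2) = j(j-1)/2` for an integer `j ≥ 2`, with the convention `C(j,2) = 0` for `j < 2`. -/
def c2 (j : ℤ) : ℤ := if 2 ≤ j then j * (j - 1) / 2 else 0

lemma c2_two_mul (j : ℤ) (h : 2 ≤ j) : 2 * c2 j = j * (j - 1) := by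
  have hdvd : (2 : ℤ) ∣ j * (j - 1) := by
    rcases Int.even_or_odd j with he | ho
    · exact Dvd.dvd.mul_right he.two_dvd _
    · obtain ⟨c, hc⟩ := ho
      exact Dvd.dvd.mul_left ⟨c, by omega⟩ _
  simp only [c2, if_pos h]
  exact Int.mul_ediv_cancel' hdvd

/-- Fourth branch of subcase (1.2.2): let `a, b, d` be integers with `a < b` and
`b + 2 ≤ d ≤ a + b`. For `q k = C(k+a+2,2) - 3 C(k+a+3-d,2) - ab` (defined for `k ≥ b - 1`),
one has `q k ^ 2 > q (k-1) * q (k+1)` for all `b ≤ k ≤ (3d-6)/2 - a - 1`. -/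
theorem stmt14 (a b d : ℤ) (hab : a < b) (hd1 : b + 2 ≤ d) (hd2 : d ≤ a + b)
    (k : ℤ) (hk1 : b ≤ k) (hk2 : k ≤ (3 * d - 6) / 2 - a - 1) :
    (c2 ((k - 1) + a + 2) - 3 * c2 ((k - 1) + a + 3 - d) - a * b)
      * (c2 ((k + 1) + a + 2) - 3 * c2 ((k + 1) + a + 3 - d) - a * b)
      < (c2 (k + a + 2) - 3 * c2 (k + a + 3 - d) - a * b) ^ 2 := by
  have ha : 2 ≤ a := by omega
  have hb : 3 ≤ b := by omega
  have hk2' : 2 * (k + a) ≤ 3 * d - 8 := by omega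
  set t := k + a with ht
  have e1 : 2 * c2 ((k - 1) + a + 2) = (t + 1) * t := by
    have := c2_two_mul ((k - 1) + a + 2) (by omega)
    calc 2 * c2 ((k - 1) + a + 2) = ((k - 1) + a + 2) * ((k - 1) + a + 2 - 1) := this
      _ = (t + 1) * t := by ring
  have e2 : 2 * c2 ((k - 1) + a + 3 - d) = (t + 2 - d) * (t + 1 - d) := by
    have := c2_two_mul ((k - 1) + a + 3 - d) (by omega)
    calc 2 * c2 ((k - 1) + a + 3 - d) = ((k - 1) + a + 3 - d) * ((k - 1) + a + 3 - d - 1) := this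
      _ = (t + 2 - d) * (t + 1 - d) := by ring
  have e3 : 2 * c2 ((k + 1) + a + 2) = (t + 3) * (t + 2) := by
    have := c2_two_mul ((k + 1) + a + 2) (by omega)
    calc 2 * c2 ((k + 1) + a + 2) = ((k + 1) + a + 2) * ((k + 1) + a + 2 - 1) := this
      _ = (t + 3) * (t + 2) := by ring
  have e4 : 2 * c2 ((k + 1) + a + 3 - d) = (t + 4 - d) * (t + 3 - d) := by
    have := c2_two_mul ((k + 1) + a + 3 - d) (by omega)
    calc 2 * c2 ((k + 1) + a + 3 - d) = ((k + 1) + a + 3 - d) * ((k + 1) + a + 3 - d - 1) := this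
      _ = (t + 4 - d) * (t + 3 - d) := by ring
  have e5 : 2 * c2 (k + a + 2) = (t + 2) * (t + 1) := by
    have := c2_two_mul (k + a + 2) (by omega)
    calc 2 * c2 (k + a + 2) = (k + a + 2) * (k + a + 2 - 1) := this
      _ = (t + 2) * (t + 1) := by ring
  have e6 : 2 * c2 (k + a + 3 - d) = (t + 3 - d) * (t + 2 - d) := by
    have := c2_two_mul (k + a + 3 - d) (by omega)
    calc 2 * c2 (k + a + 3 - d) = (k + a + 3 - d) * (k + a + 3 - d - 1) := this
      _ = (t + 3 - d) * (t + 2 - d) := by ring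
  have hm : 2 * (c2 ((k - 1) + a + 2) - 3 * c2 ((k - 1) + a + 3 - d) - a * b)
      = (t + 1) * t - 3 * ((t + 2 - d) * (t + 1 - d)) - 2 * (a * b) := by
    linear_combination e1 - 3 * e2
  have hp : 2 * (c2 ((k + 1) + a + 2) - 3 * c2 ((k + 1) + a + 3 - d) - a * b)
      = (t + 3) * (t + 2) - 3 * ((t + 4 - d) * (t + 3 - d)) - 2 * (a * b) := by
    linear_combination e3 - 3 * e4
  have h0 : 2 * (c2 (k + a + 2) - 3 * c2 (k + a + 3 - d) - a * b)
      = (t + 2) * (t + 1) - 3 * ((t + 3 - d) * (t + 2 - d)) - 2 * (a * b) := by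
    linear_combination e5 - 3 * e6
  have hts : a + b ≤ t := by omega
  have key : ((t + 1) * t - 3 * ((t + 2 - d) * (t + 1 - d)) - 2 * (a * b))
      * ((t + 3) * (t + 2) - 3 * ((t + 4 - d) * (t + 3 - d)) - 2 * (a * b))
      < ((t + 2) * (t + 1) - 3 * ((t + 3 - d) * (t + 2 - d)) - 2 * (a * b)) ^ 2 := by
    nlinarith [mul_nonneg (by omega : (0:ℤ) ≤ 3 * d - 8 - 2 * t) (by omega : (0:ℤ) ≤ d - 2),
      sq_nonneg (a - b),
      mul_nonneg (by omega : (0:ℤ) ≤ 3 * d - 2 * a - 2 * b - 8)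
        (by omega : (0:ℤ) ≤ 3 * d + 2 * a + 2 * b + 8),
      sq_nonneg (3 * d - 2 * t - 8)]
  have final : 4 * ((c2 ((k - 1) + a + 2) - 3 * c2 ((k - 1) + a + 3 - d) - a * b)
      * (c2 ((k + 1) + a + 2) - 3 * c2 ((k + 1) + a + 3 - d) - a * b))
      < 4 * ((c2 (k + a + 2) - 3 * c2 (k + a + 3 - d) - a * b) ^ 2) := by
    calc 4 * ((c2 ((k - 1) + a + 2) - 3 * c2 ((k - 1) + a + 3 - d) - a * b)
          * (c2 ((k + 1) + a + 2) - 3 * c2 ((k + 1) + a + 3 - d) - a * b))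
        = (2 * (c2 ((k - 1) + a + 2) - 3 * c2 ((k - 1) + a + 3 - d) - a * b))
          * (2 * (c2 ((k + 1) + a + 2) - 3 * c2 ((k + 1) + a + 3 - d) - a * b)) := by ring
      _ = ((t + 1) * t - 3 * ((t + 2 - d) * (t + 1 - d)) - 2 * (a * b))
          * ((t + 3) * (t + 2) - 3 * ((t + 4 - d) * (t + 3 - d)) - 2 * (a * b)) := by
            rw [hm, hp]
      _ < ((t + 2) * (t + 1) - 3 * ((t + 3 - d) * (t + 2 - d)) - 2 * (a * b)) ^ 2 := key
      _ = (2 * (c2 (k + a + 2) - 3 * c2 (k + a + 3 - d) - a * b)) ^ 2 := by rw [h0]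
      _ = 4 * ((c2 (k + a + 2) - 3 * c2 (k + a + 3 - d) - a * b) ^ 2) := by ring
  linarith
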